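/- Let f : ℝ → ℝ satisfy the one-sided monotonicity condition (y − y')(f(y) − f(y')) ≤ μ·|y − y'|² for all y, y' ∈ ℝ, with μ ≤ 0, and let Π_p be the truncation at level p > 0. Then the truncated function g(y) = f(Π_p(y)) satisfies y·(g(y) − g(0)) ≤ 0 for all y ∈ ℝ. -/

import Mathlib

/-! With `μ ≤ 0` the one-sided condition makes `f` monotonically decreasing in the sense
`(y - y') (f y - f y') ≤ 0`. Since `Π_p(y) = c y` with `c = min(p, |y|) / |y| ≥ 0`, the case
`y' = 0` gives `c · y (f (c y) - f 0) ≤ 0`, and dividing by `c` (or noting `f 0 - f 0 = 0` when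
`c = 0`) yields the claim. -/

noncomputable def trunc (p s : ℝ) : ℝ := if s = 0 then 0 else min p |s| * s / |s|

lemma trunc_zero (p : ℝ) : trunc p 0 = 0 := if_pos rfl

lemma trunc_eq_mul (p y : ℝ) : trunc p y = min p |y| / |y| * y := by
  rcases eq_or_ne y 0 with rfl | hy
  · simp [trunc_zero]
  · rw [trunc, if_neg hy]
    ring

lemma mul_sub_nonpos_of_one_sided_lipschitz {f : ℝ → ℝ} {μ : ℝ} (hμ : μ ≤ 0)
    (hmono : ∀ y y' : ℝ, (y - y') * (f y - f y') ≤ μ * |y - y'| ^ 2) (y y' : ℝ) :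
    (y - y') * (f y - f y') ≤ 0 :=
  (hmono y y').trans (mul_nonpos_of_nonpos_of_nonneg hμ (sq_nonneg _))

lemma mul_sub_apply_mul_nonpos {f : ℝ → ℝ}
    (hf : ∀ y y' : ℝ, (y - y') * (f y - f y') ≤ 0) {c : ℝ} (hc : 0 ≤ c) (y : ℝ) :
    y * (f (c * y) - f 0) ≤ 0 := by
  rcases hc.eq_or_lt with rfl | hc
  · simp
  · have h := hf (c * y) 0
    rw [sub_zero, mul_assoc] at h
    exact nonpos_of_mul_nonpos_right h hc

theorem stmt_5 (f : ℝ → ℝ) (μ : ℝ) (hμ : μ ≤ 0) (p : ℝ) (hp : 0 < p)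
    (hmono : ∀ y y' : ℝ, (y - y') * (f y - f y') ≤ μ * |y - y'| ^ 2) :
    ∀ y : ℝ, y * (f (trunc p y) - f (trunc p 0)) ≤ 0 := by
  intro y
  have hc : 0 ≤ min p |y| / |y| := div_nonneg (le_min hp.le (abs_nonneg y)) (abs_nonneg y)
  rw [trunc_zero, trunc_eq_mul]
  exact mul_sub_apply_mul_nonpos (mul_sub_nonpos_of_one_sided_lipschitz hμ hmono) hc y
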